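/- Let α > 0 and let φ_α(x) = (α/(2·√(2π)))·|x|^{α/2 − 1}·exp(−|x|^α/2) be the density of the α-normal distribution. Then ∫_ℝ ln|x|·φ_α(x) dx = −(γ + ln 2)/α, where γ is the Euler–Mascheroni constant. -/

import Mathlib

/-!
By symmetry the integral is twice the one over `(0, ∞)`, and the substitution `y = x ^ α`
turns it into `(2α√(2π))⁻¹ ∫₀^∞ log y · e^(-y/2) · y^(-1/2) dy`. Rescaling `y = 2t` and
differentiating the Gamma integral under the integral sign identifies this with
`√2 (Γ'(1/2) + log 2 · Γ(1/2)) = -√(2π) (γ + log 2)`.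
-/

open MeasureTheory Real

/-- The α-normal density `φ_α(x) = (α/(2√(2π)))·|x|^{α/2−1}·exp(−|x|^α/2)`. -/
noncomputable def alphaNormalPDF (α : ℝ) (x : ℝ) : ℝ :=
  α / (2 * Real.sqrt (2 * Real.pi)) * |x| ^ (α / 2 - 1) * Real.exp (-|x| ^ α / 2)

open Set Topology

namespace Real

theorem hasDerivAt_Gamma_integral {s : ℝ} (hs : 0 < s) :
    HasDerivAt Gamma (∫ t in Ioi 0, log t * exp (-t) * t ^ (s - 1)) s := by
  have hC := (Complex.hasDerivAt_GammaIntegral (s := s) (by simpa using hs)).real_of_complex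
  have hΓ : (fun x : ℝ => (Complex.GammaIntegral x).re) =ᶠ[𝓝 s] Gamma := by
    filter_upwards [lt_mem_nhds hs] with x hx
    rw [Complex.GammaIntegral_ofReal, Complex.ofReal_re, Gamma_eq_integral hx]
  have hI : ∫ t : ℝ in Ioi 0, (t : ℂ) ^ ((s : ℂ) - 1) * (log t * exp (-t))
      = ((∫ t in Ioi 0, log t * exp (-t) * t ^ (s - 1) : ℝ) : ℂ) := by
    rw [← integral_complex_ofReal]
    refine setIntegral_congr_fun measurableSet_Ioi fun t ht => ?_
    rw [← Complex.ofReal_one, ← Complex.ofReal_sub, ← Complex.ofReal_cpow (le_of_lt ht)]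
    push_cast
    ring
  rw [hI, Complex.ofReal_re] at hC
  exact hC.congr_of_eventuallyEq hΓ.symm

theorem abs_log_le_rpow_add_rpow_neg {x ε : ℝ} (hx : 0 ≤ x) (hε : 0 < ε) :
    |log x| ≤ (x ^ ε + x ^ (-ε)) / ε := by
  have hpos : 0 ≤ x ^ ε := rpow_nonneg hx ε
  have hneg : 0 ≤ x ^ (-ε) := rpow_nonneg hx (-ε)
  rcases le_total 0 (log x) with h | h
  · rw [abs_of_nonneg h]
    calc log x ≤ x ^ ε / ε := log_le_rpow_div hx hε
      _ ≤ (x ^ ε + x ^ (-ε)) / ε := by gcongr; linarith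
  · rw [abs_of_nonpos h, ← log_inv]
    calc log x⁻¹ ≤ x⁻¹ ^ ε / ε := log_le_rpow_div (inv_nonneg.mpr hx) hε
      _ = x ^ (-ε) / ε := by rw [inv_rpow hx, rpow_neg hx]
      _ ≤ (x ^ ε + x ^ (-ε)) / ε := by gcongr; linarith

theorem integrableOn_log_mul_exp_neg_mul_rpow {s : ℝ} (hs : 0 < s) :
    IntegrableOn (fun t => log t * exp (-t) * t ^ (s - 1)) (Ioi 0) := by
  have hε : 0 < s / 2 := half_pos hs
  have hbound : IntegrableOn
      (fun t => (exp (-t) * t ^ (3 * s / 2 - 1) + exp (-t) * t ^ (s / 2 - 1)) / (s / 2))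
      (Ioi 0) :=
    ((GammaIntegral_convergent (by linarith)).add (GammaIntegral_convergent hε)).div_const _
  refine hbound.mono' ?_ ?_
  · have hcont : ContinuousOn (fun t => log t * exp (-t) * t ^ (s - 1)) (Ioi 0) := by
      fun_prop (disch := grind)
    exact hcont.aestronglyMeasurable measurableSet_Ioi
  · refine (ae_restrict_iff' measurableSet_Ioi).mpr (ae_of_all _ fun t (ht : 0 < t) => ?_)
    rw [norm_mul, norm_mul, Real.norm_eq_abs, Real.norm_of_nonneg (exp_pos _).le,
      Real.norm_of_nonneg (rpow_pos_of_pos ht _).le]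
    have hsplit : (t ^ (s / 2) + t ^ (-(s / 2))) * t ^ (s - 1)
        = t ^ (3 * s / 2 - 1) + t ^ (s / 2 - 1) := by
      rw [add_mul, ← rpow_add ht, ← rpow_add ht]
      ring_nf
    calc |log t| * exp (-t) * t ^ (s - 1)
        ≤ (t ^ (s / 2) + t ^ (-(s / 2))) / (s / 2) * exp (-t) * t ^ (s - 1) := by
          gcongr; exact abs_log_le_rpow_add_rpow_neg ht.le hε
      _ = _ := by rw [← mul_add, ← hsplit]; ring

theorem integral_log_mul_exp_neg_div_mul_rpow {s c : ℝ} (hs : 0 < s) (hc : 0 < c) :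
    ∫ t in Ioi 0, log t * exp (-t / c) * t ^ (s - 1)
      = c ^ s * (deriv Gamma s + log c * Gamma s) := by
  have hsub := integral_comp_mul_left_Ioi (fun t => log t * exp (-t / c) * t ^ (s - 1)) 0 hc
  have hscaled : ∫ t in Ioi 0, log (c * t) * exp (-(c * t) / c) * (c * t) ^ (s - 1)
      = c ^ (s - 1) * (deriv Gamma s + log c * Gamma s) := by
    rw [(hasDerivAt_Gamma_integral hs).deriv, Gamma_eq_integral hs, ← integral_const_mul,
      ← integral_add (integrableOn_log_mul_exp_neg_mul_rpow hs)
        ((GammaIntegral_convergent hs).const_mul _), ← integral_const_mul]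
    refine setIntegral_congr_fun measurableSet_Ioi fun t (ht : 0 < t) => ?_
    rw [log_mul hc.ne' ht.ne', mul_rpow hc.le ht.le, neg_div, mul_div_cancel_left₀ _ hc.ne']
    ring
  rw [hscaled, mul_zero, smul_eq_mul, eq_inv_mul_iff_mul_eq₀ hc.ne'] at hsub
  rw [← hsub, ← mul_assoc, ← rpow_one_add' hc.le (by linarith)]
  ring_nf

end Real

theorem alphaNormalPDF_abs (α x : ℝ) : alphaNormalPDF α |x| = alphaNormalPDF α x := by
  simp only [alphaNormalPDF, abs_abs]

theorem integral_log_mul_alphaNormalPDF_Ioi {α : ℝ} (hα : 0 < α) :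
    ∫ x in Ioi 0, log x * alphaNormalPDF α x
      = (∫ y in Ioi 0, log y * exp (-y / 2) * y ^ ((1 : ℝ) / 2 - 1)) / (2 * α * √(2 * π)) := by
  rw [eq_div_iff (by positivity), ← integral_mul_const,
    ← integral_comp_rpow_Ioi (fun y => log y * exp (-y / 2) * y ^ ((1 : ℝ) / 2 - 1)) hα.ne']
  refine setIntegral_congr_fun measurableSet_Ioi fun x (hx : 0 < x) => ?_
  rw [alphaNormalPDF, abs_of_pos hx, abs_of_pos hα, smul_eq_mul, log_rpow hx, ← rpow_mul hx.le]
  have hexp : x ^ (α / 2 - 1) = x ^ (α - 1) * x ^ (α * ((1 : ℝ) / 2 - 1)) := by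
    rw [← rpow_add hx]
    ring_nf
  rw [hexp]
  field_simp

/-- `∫_ℝ ln|x|·φ_α(x) dx = −(γ + ln 2)/α`, with `γ` the Euler–Mascheroni
constant. -/
theorem alphaNormal_log_moment (α : ℝ) (hα : 0 < α) :
    ∫ x, Real.log |x| * alphaNormalPDF α x
      = -(Real.eulerMascheroniConstant + Real.log 2) / α := by
  have hsymm : ∫ x, log |x| * alphaNormalPDF α x
      = 2 * ∫ x in Ioi 0, log x * alphaNormalPDF α x := by
    simpa only [alphaNormalPDF_abs] using
      integral_comp_abs (f := fun x => log x * alphaNormalPDF α x)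
  rw [hsymm, integral_log_mul_alphaNormalPDF_Ioi hα,
    integral_log_mul_exp_neg_div_mul_rpow one_half_pos two_pos,
    hasDerivAt_Gamma_one_half.deriv, Gamma_one_half_eq, ← sqrt_eq_rpow, sqrt_mul zero_le_two]
  field_simp
  ring
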